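/- arXiv:2602.13560 — 10 statements merged into one kernel-verified Lean document; each statement's English description precedes it below -/
import Mathlib

section
/- Let R be a Noetherian ring with identity, M a finitely generated projective R-module, and S a chain (totally ordered by inclusion) of R-submodules of M such that M/A is projective for every A in S. Then S is a finite set. -/
/-!
Since `R` is Noetherian and `M` finitely generated, the submodules of `M` satisfy the ascending
chain condition. A projective quotient `M ⧸ A` splits off, so every `A ∈ S` is complemented in the
modular lattice of submodules. In a modular lattice with ACC, a strictly descending sequence of
complemented elements produces a strictly ascending one, so `S` also satisfies the descending chain
condition; a chain with both chain conditions is finite.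
-/

section ModularLattice

variable {α : Type*} [Lattice α] [BoundedOrder α] [IsModularLattice α]

theorem IsCompl.sup_inf_of_le {a b c : α} (h : IsCompl a c) (hab : a ≤ b) : a ⊔ c ⊓ b = b := by
  rw [← sup_inf_assoc_of_le c hab, h.sup_eq_top, top_inf_eq]

/-- `d n := c (n + 1) ⊓ u n` is a nonzero complement of `u (n + 1)` inside `u n`; the partial
sups of the `d n` stay disjoint from the `u (n + 1)`, hence strictly increase. -/
theorem exists_strictMono_of_strictAnti_of_isComplemented {u : ℕ → α} (hu : StrictAnti u)
    (hc : ∀ n, IsComplemented (u n)) : ∃ v : ℕ → α, StrictMono v := by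
  choose c hc using hc
  set d : ℕ → α := fun n ↦ c (n + 1) ⊓ u n
  have hd_le (n : ℕ) : d n ≤ u n := inf_le_right
  have hd_disjoint (n : ℕ) : Disjoint (d n) (u (n + 1)) :=
    (hc (n + 1)).disjoint.symm.mono_left inf_le_left
  have hd_ne_bot (n : ℕ) : d n ≠ ⊥ := fun h ↦ by
    have hsup : u (n + 1) ⊔ d n = u n := (hc (n + 1)).sup_inf_of_le (hu n.lt_succ_self).le
    rw [h, sup_bot_eq] at hsup
    exact (hu n.lt_succ_self).ne hsup
  have hsucc (n : ℕ) : partialSups d (n + 1) = partialSups d n ⊔ d (n + 1) := partialSups_succ d n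
  have hdisjoint (n : ℕ) : Disjoint (partialSups d n) (u (n + 1)) := by
    induction n with
    | zero => simpa using hd_disjoint 0
    | succ n ih =>
      rw [hsucc]
      exact (hd_disjoint (n + 1)).disjoint_sup_left_of_disjoint_sup_right
        (ih.mono_right (sup_le (hd_le _) (hu (n + 1).lt_succ_self).le))
  refine ⟨partialSups d, strictMono_nat_of_lt_succ fun n ↦ ?_⟩
  rw [hsucc, left_lt_sup]
  exact fun h ↦ hd_ne_bot (n + 1) (le_bot_iff.mp (hdisjoint n h (hd_le _)))

instance wellFoundedLT_isComplemented [WellFoundedGT α] :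
    WellFoundedLT {a : α // IsComplemented a} := by
  refine ⟨wellFounded_iff_isEmpty_descending_chain.2 ⟨fun ⟨f, hf⟩ ↦ ?_⟩⟩
  obtain ⟨v, hv⟩ := exists_strictMono_of_strictAnti_of_isComplemented
    (u := fun n ↦ (f n : α)) (strictAnti_nat_of_succ_lt hf) fun n ↦ (f n).2
  exact not_strictMono_of_wellFoundedGT v hv

end ModularLattice

theorem IsChain.finite_of_wellFounded {α : Type*} [PartialOrder α] {s : Set α}
    (hs : IsChain (· ≤ ·) s) [WellFoundedLT s] [WellFoundedGT s] : s.Finite := by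
  classical
  let := hs.linearOrder
  have := Finite.of_wellFoundedLT_wellFoundedGT s
  exact s.toFinite

theorem Submodule.isComplemented_of_projective_quotient {R M : Type*} [Ring R] [AddCommGroup M]
    [Module R M] (A : Submodule R M) [Module.Projective R (M ⧸ A)] : IsComplemented A := by
  obtain ⟨s, hs⟩ := A.mkQ.exists_rightInverse_of_surjective A.range_mkQ
  have hs' (y : M ⧸ A) : Submodule.Quotient.mk (s y) = y := LinearMap.congr_fun hs y
  refine ⟨_, LinearMap.IsProj.isCompl (f := LinearMap.id - s ∘ₗ A.mkQ) ⟨fun x ↦ ?_, fun x hx ↦ ?_⟩⟩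
  · rw [← Submodule.Quotient.mk_eq_zero]
    simp [hs']
  · simp [(Submodule.Quotient.mk_eq_zero A).2 hx]

theorem stmt_0_general {R : Type*} [Ring R] [IsNoetherianRing R]
    {M : Type*} [AddCommGroup M] [Module R M]
    [Module.Finite R M]
    (S : Set (Submodule R M)) (hchain : IsChain (· ≤ ·) S)
    (hproj : ∀ A ∈ S, Module.Projective R (M ⧸ A)) :
    S.Finite := by
  have hcompl (A : S) : IsComplemented (A : Submodule R M) :=
    have := hproj A A.2
    A.1.isComplemented_of_projective_quotient
  have : WellFoundedGT S := (Subtype.strictMono_coe (· ∈ S)).wellFoundedGT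
  have : WellFoundedLT S :=
    (show StrictMono fun A : S ↦ (⟨A, hcompl A⟩ : {A : Submodule R M // IsComplemented A}) from
      fun _ _ h ↦ h).wellFoundedLT
  exact hchain.finite_of_wellFounded

/-- Lemma: over a Noetherian ring, a chain of submodules of a finitely generated
projective module all of whose quotients are projective is finite. -/
theorem stmt_0 {R : Type*} [Ring R] [IsNoetherianRing R]
    {M : Type*} [AddCommGroup M] [Module R M]
    [Module.Finite R M] [Module.Projective R M]
    (S : Set (Submodule R M)) (hchain : IsChain (· ≤ ·) S)
    (hproj : ∀ A ∈ S, Module.Projective R (M ⧸ A)) :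
    S.Finite :=
  stmt_0_general S hchain hproj
end

section
/- Let R be a commutative ring and let φ : M → N be a homomorphism of R-modules such that coker(φ) is projective. Then the image of the dual map φ* : N* → M* equals the annihilator of ker(φ) in M*, i.e. im(φ*) = {f ∈ M* : f(a) = 0 for all a ∈ ker(φ)}, provided M/ker(φ) is projective (which follows e.g. when M and N are projective). -/
/-!
A projective cokernel makes `0 → im φ → N → coker φ → 0` split, so every functional on `im φ`
extends to `N`. Hence `φ*` has the same image as the dual of the corestriction `M ↠ im φ`, and
for a surjection the image of the dual map is the annihilator of the kernel.
-/

namespace Submodule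

theorem exists_retraction_of_projective_quotient {R N : Type*} [Ring R] [AddCommGroup N]
    [Module R N] (p : Submodule R N) [Module.Projective R (N ⧸ p)] :
    ∃ r : N →ₗ[R] p, r ∘ₗ p.subtype = .id := by
  obtain ⟨s, hs⟩ := Module.projective_lifting_property p.mkQ .id p.mkQ_surjective
  have hexact := LinearMap.exact_subtype_mkQ p
  exact ⟨_, ((hexact.splitInjectiveEquiv p.mkQ_surjective).symm
    (hexact.splitSurjectiveEquiv p.injective_subtype ⟨s, hs⟩)).2⟩

theorem dualRestrict_surjective_of_projective_quotient {R N : Type*} [CommRing R]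
    [AddCommGroup N] [Module R N] (p : Submodule R N) [Module.Projective R (N ⧸ p)] :
    Function.Surjective p.subtype.dualMap := by
  obtain ⟨r, hr⟩ := p.exists_retraction_of_projective_quotient
  intro f
  refine ⟨f ∘ₗ r, ?_⟩
  rw [LinearMap.dualMap_apply', LinearMap.comp_assoc, hr, LinearMap.comp_id]

end Submodule

theorem stmt_3_general {R : Type*} [CommRing R]
    {M N : Type*} [AddCommGroup M] [Module R M] [AddCommGroup N] [Module R N]
    (φ : M →ₗ[R] N)
    (hcoker : Module.Projective R (N ⧸ LinearMap.range φ)) :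
    LinearMap.range φ.dualMap = (LinearMap.ker φ).dualAnnihilator :=
  φ.range_dualMap_eq_dualAnnihilator_ker_of_subtype_range_surjective
    (LinearMap.range φ).dualRestrict_surjective_of_projective_quotient

/-- If coker(φ) and M/ker(φ) are projective, then the image of the dual map
φ* equals the annihilator of ker(φ). -/
theorem stmt_3 {R : Type*} [CommRing R]
    {M N : Type*} [AddCommGroup M] [Module R M] [AddCommGroup N] [Module R N]
    (φ : M →ₗ[R] N)
    (hcoker : Module.Projective R (N ⧸ LinearMap.range φ))
    (hcoim : Module.Projective R (M ⧸ LinearMap.ker φ)) :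
    LinearMap.range φ.dualMap = (LinearMap.ker φ).dualAnnihilator :=
  stmt_3_general φ hcoker
end

section
/- Let P be a totally ordered poset with distinct minimum r and maximum w, and let F : P → R-Mod be a functor such that (a) coker(F_{r,w}) is projective, (b) every structure map F_{x,y} (x ≤ y) is injective, and (c) F_r = M ⊕ N with M a nonzero projective R-module. Then F decomposes as an internal direct sum F = I ⊕ G of subfunctors, where I_x ≅ M for all x ∈ P, all structure maps of I are isomorphisms, I_r = M, and G_r = N. -/
/-!
Since the cokernel of `F_{r,w}` is projective, `F_w = im F_{r,w} ⊕ C` for some `C`, and as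
`F_{r,w}` is injective this refines to `F_w = F_{r,w}(M) ⊕ (F_{r,w}(N) ⊕ C)`. Take `I_x` to be the
image of `M` under `F_{r,x}` and `G_x` the preimage of `F_{r,w}(N) ⊕ C` under `F_{x,w}`. Since
`F_{x,w}` is injective and carries `I_x` onto `F_{r,w}(M)`, pulling this splitting of `F_w` back
along `F_{x,w}` gives `F_x = I_x ⊕ G_x`.
-/

namespace Submodule

variable {R M M' : Type*} [Ring R] [AddCommGroup M] [Module R M] [AddCommGroup M'] [Module R M']

theorem exists_isCompl_of_projective_quotient (p : Submodule R M)
    [Module.Projective R (M ⧸ p)] : ∃ q : Submodule R M, IsCompl p q := by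
  obtain ⟨s, hs⟩ := p.mkQ.exists_rightInverse_of_surjective p.range_mkQ
  have hidem : IsIdempotentElem (s ∘ₗ p.mkQ) := by
    change (s ∘ₗ p.mkQ) ∘ₗ (s ∘ₗ p.mkQ) = s ∘ₗ p.mkQ
    rw [LinearMap.comp_assoc, ← LinearMap.comp_assoc p.mkQ s p.mkQ, hs, LinearMap.id_comp]
  have hker : LinearMap.ker (s ∘ₗ p.mkQ) = p := by
    rw [LinearMap.ker_comp_of_ker_eq_bot _ (LinearMap.ker_eq_bot_of_inverse hs), ker_mkQ]
  exact ⟨_, by simpa only [hker] using (LinearMap.IsIdempotentElem.isCompl hidem).symm⟩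

theorem isCompl_map_sup_of_isCompl {f : M →ₗ[R] M'} (hf : Function.Injective f)
    {p q : Submodule R M} (hpq : IsCompl p q) {C : Submodule R M'}
    (hC : IsCompl (LinearMap.range f) C) : IsCompl (p.map f) (q.map f ⊔ C) :=
  (disjoint_map hf hpq.disjoint).isCompl_sup_right_of_isCompl_sup_left
    (by rwa [← map_sup, hpq.sup_eq_top, map_top])

theorem isCompl_comap_of_isCompl_map {f : M →ₗ[R] M'} (hf : Function.Injective f)
    {p : Submodule R M} {q : Submodule R M'} (h : IsCompl (p.map f) q) :
    IsCompl p (q.comap f) := by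
  constructor
  · rw [disjoint_def]
    intro v hvp hvq
    exact hf <| by
      rw [map_zero]
      exact disjoint_def.mp h.disjoint (f v) (mem_map_of_mem hvp) hvq
  · rw [codisjoint_iff, eq_top_iff]
    intro v _
    obtain ⟨_, ⟨u, hu, rfl⟩, b, hb, hub⟩ := mem_sup.mp (h.sup_eq_top ▸ mem_top : f v ∈ _)
    refine mem_sup.mpr ⟨u, hu, v - u, ?_, add_sub_cancel u v⟩
    rwa [mem_comap, map_sub, ← hub, add_sub_cancel_left]

end Submodule

theorem stmt_7_general {R : Type*} [Ring R] {P : Type*} [LinearOrder P]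
    (F : P → Type*) [∀ x, AddCommGroup (F x)] [∀ x, Module R (F x)]
    (Fmap : ∀ x y : P, x ≤ y → (F x →ₗ[R] F y))
    (Fmap_id : ∀ x, Fmap x x le_rfl = LinearMap.id)
    (Fmap_comp : ∀ x y z (hxy : x ≤ y) (hyz : y ≤ z),
      (Fmap y z hyz).comp (Fmap x y hxy) = Fmap x z (hxy.trans hyz))
    (r w : P) (hmin : ∀ x, r ≤ x) (hmax : ∀ x, x ≤ w)
    (hcoker : Module.Projective R
      (F w ⧸ LinearMap.range (Fmap r w (hmin w))))
    (hinj : ∀ x y (h : x ≤ y), Function.Injective (Fmap x y h))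
    (M N : Submodule R (F r)) (hMN : IsCompl M N) :
    ∃ I G : ∀ x, Submodule R (F x),
      (∀ x, IsCompl (I x) (G x)) ∧
      (∀ x y (h : x ≤ y), (I x).map (Fmap x y h) = I y) ∧
      (∀ x y (h : x ≤ y), Set.InjOn (Fmap x y h) (I x : Set (F x))) ∧
      (∀ x y (h : x ≤ y), (G x).map (Fmap x y h) ≤ G y) ∧
      (∀ x, Nonempty (↥(I x) ≃ₗ[R] ↥M)) ∧
      I r = M ∧ G r = N := by
  set f := Fmap r w (hmin w)
  obtain ⟨C, hC⟩ := (LinearMap.range f).exists_isCompl_of_projective_quotient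
  have hw : IsCompl (M.map f) (N.map f ⊔ C) :=
    Submodule.isCompl_map_sup_of_isCompl (hinj r w _) hMN hC
  set I := fun x => M.map (Fmap r x (hmin x))
  set G := fun x => (N.map f ⊔ C).comap (Fmap x w (hmax x))
  have hIG : ∀ x, IsCompl (I x) (G x) := fun x =>
    Submodule.isCompl_comap_of_isCompl_map (hinj x w _) <| by
      rwa [← Submodule.map_comp, Fmap_comp]
  have hIr : I r = M := by
    change M.map (Fmap r r le_rfl) = M
    rw [Fmap_id, Submodule.map_id]
  refine ⟨I, G, hIG, fun x y h => ?_, fun x y h => (hinj x y h).injOn,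
    fun x y h => ?_, fun x => ?_, hIr, ?_⟩
  · rw [← Submodule.map_comp, Fmap_comp]
  · rw [Submodule.map_le_iff_le_comap, ← Submodule.comap_comp, Fmap_comp]
  · exact ⟨(Submodule.equivMapOfInjective _ (hinj r x (hmin x)) M).symm⟩
  · have hNG : N ≤ G r := (Submodule.le_comap_map f N).trans (Submodule.comap_mono le_sup_left)
    exact ((le_iff_eq_of_codisjoint_of_disjoint hMN.symm.codisjoint
      (hIr ▸ (hIG r).disjoint)).mp hNG).symm

/-- Decomposition of a totally ordered persistence module with distinct minimum
r and maximum w, all structure maps injective, coker(F_{r,w}) projective, and a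
decomposition F_r = M ⊕ N with M nonzero projective: F splits as I ⊕ G with
I of constant type M, I_r = M and G_r = N. -/
theorem stmt_7 {R : Type*} [Ring R] {P : Type*} [LinearOrder P]
    (F : P → Type*) [∀ x, AddCommGroup (F x)] [∀ x, Module R (F x)]
    (Fmap : ∀ x y : P, x ≤ y → (F x →ₗ[R] F y))
    (Fmap_id : ∀ x, Fmap x x le_rfl = LinearMap.id)
    (Fmap_comp : ∀ x y z (hxy : x ≤ y) (hyz : y ≤ z),
      (Fmap y z hyz).comp (Fmap x y hxy) = Fmap x z (hxy.trans hyz))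
    (r w : P) (hrw : r ≠ w) (hmin : ∀ x, r ≤ x) (hmax : ∀ x, x ≤ w)
    (hcoker : Module.Projective R
      (F w ⧸ LinearMap.range (Fmap r w (hmin w))))
    (hinj : ∀ x y (h : x ≤ y), Function.Injective (Fmap x y h))
    (M N : Submodule R (F r)) (hMN : IsCompl M N)
    (hM0 : M ≠ ⊥) (hMproj : Module.Projective R M) :
    ∃ I G : ∀ x, Submodule R (F x),
      (∀ x, IsCompl (I x) (G x)) ∧
      (∀ x y (h : x ≤ y), (I x).map (Fmap x y h) = I y) ∧
      (∀ x y (h : x ≤ y), Set.InjOn (Fmap x y h) (I x : Set (F x))) ∧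
      (∀ x y (h : x ≤ y), (G x).map (Fmap x y h) ≤ G y) ∧
      (∀ x, Nonempty (↥(I x) ≃ₗ[R] ↥M)) ∧
      I r = M ∧ G r = N :=
  stmt_7_general F Fmap Fmap_id Fmap_comp r w hmin hmax hcoker hinj M N hMN
end

section
/- Let P be a totally ordered poset with distinct minimum r and maximum w, and let F : P → R-Mod be a functor such that (a) every structure map F_{x,y} is surjective, (b) F_w is projective, and (c) F_w = M ⊕ N with M a nonzero projective R-module. Then F decomposes as an internal direct sum F = I ⊕ G of subfunctors, where I_x ≅ M for all x ∈ P, all structure maps of I are isomorphisms, I_w = M, and G_w = N. -/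
/-!
Lift the inclusion `M ↪ F w` through the surjection `F r → F w`, which is possible because `M`
is projective, and push the lift forward to get compatible sections `σ x : M → F x` of the maps
`F x → F w` over `M`. Then `I x := range (σ x)` is a copy of `M` carried isomorphically along the
module, and its complement is the preimage of `N` under `F x → F w`.
-/

open LinearMap

namespace LinearMap

variable {R V W : Type*} [Ring R] [AddCommGroup V] [AddCommGroup W] [Module R V] [Module R W]

theorem isCompl_range_ker_of_comp_eq_id {σ : W →ₗ[R] V} {ρ : V →ₗ[R] W} (h : ρ ∘ₗ σ = id) :
    IsCompl (range σ) (ker ρ) := by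
  have hρσ : ∀ m, ρ (σ m) = m := LinearMap.congr_fun h
  constructor
  · rw [Submodule.disjoint_def]
    rintro _ ⟨m, rfl⟩ hm
    rw [mem_ker, hρσ] at hm
    rw [hm, map_zero]
  · rw [codisjoint_iff_le_sup]
    intro v _
    refine Submodule.mem_sup.mpr ⟨σ (ρ v), mem_range_self σ _, v - σ (ρ v), ?_, add_sub_cancel _ _⟩
    rw [mem_ker, map_sub, hρσ, sub_self]

theorem isCompl_range_comap_of_comp_eq_subtype {f : V →ₗ[R] W} {M N : Submodule R W}
    (hMN : IsCompl M N) {σ : M →ₗ[R] V} (hσ : f ∘ₗ σ = M.subtype) :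
    IsCompl (range σ) (N.comap f) := by
  have hker : ker (M.projectionOnto N hMN ∘ₗ f) = N.comap f := by
    rw [ker_comp, Submodule.ker_projectionOnto]
  rw [← hker]
  refine isCompl_range_ker_of_comp_eq_id ?_
  rw [comp_assoc, hσ, Submodule.projectionOnto_comp_subtype]

end LinearMap

section PersistenceModule

variable {R : Type*} [Ring R] {P : Type*} [Preorder P]
  {F : P → Type*} [∀ x, AddCommGroup (F x)] [∀ x, Module R (F x)]
  {Fmap : ∀ x y : P, x ≤ y → (F x →ₗ[R] F y)}

theorem exists_compatible_lift_of_projective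
    (Fmap_comp : ∀ x y z (hxy : x ≤ y) (hyz : y ≤ z),
      (Fmap y z hyz).comp (Fmap x y hxy) = Fmap x z (hxy.trans hyz))
    {r w : P} (hmin : ∀ x, r ≤ x) (hsurj : Function.Surjective (Fmap r w (hmin w)))
    {M : Type*} [AddCommGroup M] [Module R M] [Module.Projective R M] (ι : M →ₗ[R] F w) :
    ∃ σ : ∀ x, M →ₗ[R] F x, (∀ x y (h : x ≤ y), Fmap x y h ∘ₗ σ x = σ y) ∧ σ w = ι := by
  obtain ⟨s, hs⟩ := Module.projective_lifting_property _ ι hsurj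
  refine ⟨fun x => Fmap r x (hmin x) ∘ₗ s, fun x y h => ?_, hs⟩
  rw [← comp_assoc, Fmap_comp]

end PersistenceModule

theorem stmt_8_general {R : Type*} [Ring R] {P : Type*} [LinearOrder P]
    (F : P → Type*) [∀ x, AddCommGroup (F x)] [∀ x, Module R (F x)]
    (Fmap : ∀ x y : P, x ≤ y → (F x →ₗ[R] F y))
    (Fmap_id : ∀ x, Fmap x x le_rfl = LinearMap.id)
    (Fmap_comp : ∀ x y z (hxy : x ≤ y) (hyz : y ≤ z),
      (Fmap y z hyz).comp (Fmap x y hxy) = Fmap x z (hxy.trans hyz))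
    (r w : P) (hmin : ∀ x, r ≤ x) (hmax : ∀ x, x ≤ w)
    (hsurj : ∀ x y (h : x ≤ y), Function.Surjective (Fmap x y h))
    (M N : Submodule R (F w)) (hMN : IsCompl M N)
    (hMproj : Module.Projective R M) :
    ∃ I G : ∀ x, Submodule R (F x),
      (∀ x, IsCompl (I x) (G x)) ∧
      (∀ x y (h : x ≤ y), (I x).map (Fmap x y h) = I y) ∧
      (∀ x y (h : x ≤ y), Set.InjOn (Fmap x y h) (I x : Set (F x))) ∧
      (∀ x y (h : x ≤ y), (G x).map (Fmap x y h) ≤ G y) ∧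
      (∀ x, Nonempty (↥(I x) ≃ₗ[R] ↥M)) ∧
      I w = M ∧ G w = N := by
  obtain ⟨σ, hσ, hσw⟩ :=
    exists_compatible_lift_of_projective Fmap_comp hmin (hsurj r w _) M.subtype
  have hσ_top : ∀ x, Fmap x w (hmax x) ∘ₗ σ x = M.subtype := fun x => (hσ x w _).trans hσw
  have hσ_inj : ∀ x, Function.Injective (σ x) := fun x =>
    Function.Injective.of_comp (f := Fmap x w (hmax x)) <| by
      rw [← coe_comp, hσ_top]
      exact Subtype.val_injective
  refine ⟨fun x => range (σ x), fun x => N.comap (Fmap x w (hmax x)),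
    fun x => isCompl_range_comap_of_comp_eq_subtype hMN (hσ_top x),
    fun x y h => by rw [← range_comp, hσ],
    fun x y h => ?_, fun x y h => ?_,
    fun x => ⟨(LinearEquiv.ofInjective _ (hσ_inj x)).symm⟩,
    (congrArg range hσw).trans M.range_subtype,
    (congrArg (N.comap ·) (Fmap_id w)).trans (Submodule.comap_id N)⟩
  · apply Function.Injective.injOn_range
    rw [← coe_comp, hσ]
    exact hσ_inj y
  · dsimp only
    rw [← Fmap_comp x y w h (hmax y), Submodule.comap_comp]
    exact Submodule.map_comap_le _ _

/-- Decomposition of a totally ordered persistence module with distinct minimum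
r and maximum w, all structure maps surjective, F_w projective, and a
decomposition F_w = M ⊕ N with M nonzero projective: F splits as I ⊕ G with
I of constant type M, I_w = M and G_w = N. -/
theorem stmt_8 {R : Type*} [Ring R] {P : Type*} [LinearOrder P]
    (F : P → Type*) [∀ x, AddCommGroup (F x)] [∀ x, Module R (F x)]
    (Fmap : ∀ x y : P, x ≤ y → (F x →ₗ[R] F y))
    (Fmap_id : ∀ x, Fmap x x le_rfl = LinearMap.id)
    (Fmap_comp : ∀ x y z (hxy : x ≤ y) (hyz : y ≤ z),
      (Fmap y z hyz).comp (Fmap x y hxy) = Fmap x z (hxy.trans hyz))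
    (r w : P) (hrw : r ≠ w) (hmin : ∀ x, r ≤ x) (hmax : ∀ x, x ≤ w)
    (hsurj : ∀ x y (h : x ≤ y), Function.Surjective (Fmap x y h))
    (hwproj : Module.Projective R (F w))
    (M N : Submodule R (F w)) (hMN : IsCompl M N)
    (hM0 : M ≠ ⊥) (hMproj : Module.Projective R M) :
    ∃ I G : ∀ x, Submodule R (F x),
      (∀ x, IsCompl (I x) (G x)) ∧
      (∀ x y (h : x ≤ y), (I x).map (Fmap x y h) = I y) ∧
      (∀ x y (h : x ≤ y), Set.InjOn (Fmap x y h) (I x : Set (F x))) ∧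
      (∀ x y (h : x ≤ y), (G x).map (Fmap x y h) ≤ G y) ∧
      (∀ x, Nonempty (↥(I x) ≃ₗ[R] ↥M)) ∧
      I w = M ∧ G w = N :=
  stmt_8_general F Fmap Fmap_id Fmap_comp r w hmin hmax hsurj M N hMN hMproj
end

section
/- Let R be a ring with identity, P a poset, and F : P → R-Mod a persistence module of projective constant type, i.e. F ≅ F(I, M) for some interval I in P and some indecomposable projective R-module M. Then F is indecomposable as a persistence module. -/
/-! Inside `I` all structure maps are isomorphisms, so a decomposition `F = G ⊕ H` into persistence
submodules is carried isomorphically along every comparable pair of points of `I`; in particular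
whether `G x` vanishes does not change along such a pair, hence, `I` being connected, it is constant
on `I`. At one point `x₀ ∈ I` the decomposition `F x₀ = G x₀ ⊕ H x₀` of `F x₀ ≅ M` is trivial by
indecomposability of `M`, and outside `I` everything vanishes. -/

/-- An interval in a poset: a nonempty, convex and connected subset. -/
def IsInterval {P : Type*} [PartialOrder P] (I : Set P) : Prop :=
  I.Nonempty ∧
  (∀ x y z : P, x ∈ I → z ∈ I → x ≤ y → y ≤ z → y ∈ I) ∧
  (∀ x z, x ∈ I → z ∈ I → ∃ (n : ℕ) (c : ℕ → P), c 0 = x ∧ c n = z ∧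
    (∀ i ≤ n, c i ∈ I) ∧ ∀ i < n, c i ≤ c (i + 1) ∨ c (i + 1) ≤ c i)

namespace Submodule

variable {R V W : Type*} [Ring R] [AddCommGroup V] [Module R V] [AddCommGroup W] [Module R W]

/-- Modular law: `C = f(A) ⊔ (C ⊓ f(B))`, and `C ⊓ f(B) ≤ C ⊓ D = ⊥`. -/
theorem map_eq_of_isCompl_of_surjective {f : V →ₗ[R] W} (hf : Function.Surjective f)
    {A B : Submodule R V} {C D : Submodule R W} (hAB : IsCompl A B) (hCD : IsCompl C D)
    (hAC : A.map f ≤ C) (hBD : B.map f ≤ D) : A.map f = C := by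
  have hsup : A.map f ⊔ B.map f = ⊤ := by
    rw [← map_sup, hAB.sup_eq_top, map_top, LinearMap.range_eq_top.mpr hf]
  have hinf : B.map f ⊓ C = ⊥ :=
    le_bot_iff.mp ((inf_le_inf_right C hBD).trans hCD.symm.inf_eq_bot.le)
  calc A.map f = (A.map f ⊔ B.map f) ⊓ C := by rw [sup_inf_assoc_of_le _ hAC, hinf, sup_bot_eq]
    _ = C := by rw [hsup, top_inf_eq]

theorem eq_bot_iff_of_isCompl_of_bijective {f : V →ₗ[R] W} (hf : Function.Bijective f)
    {A B : Submodule R V} {C D : Submodule R W} (hAB : IsCompl A B) (hCD : IsCompl C D)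
    (hAC : A.map f ≤ C) (hBD : B.map f ≤ D) : A = ⊥ ↔ C = ⊥ := by
  rw [← map_eq_of_isCompl_of_surjective hf.2 hAB hCD hAC hBD]
  exact ((map_injective_of_injective hf.1).eq_iff' (map_bot f)).symm

theorem eq_bot_or_eq_bot_of_isCompl_of_linearEquiv {M : Type*} [AddCommGroup M] [Module R M]
    (e : V ≃ₗ[R] M) (hM : ∀ N L : Submodule R M, IsCompl N L → N = ⊥ ∨ L = ⊥)
    {A B : Submodule R V} (hAB : IsCompl A B) : A = ⊥ ∨ B = ⊥ := by
  let φ := orderIsoMapComap e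
  exact (hM _ _ (φ.isCompl hAB)).imp (map_eq_bot_iff φ).1 (map_eq_bot_iff φ).1

end Submodule

theorem IsInterval.iff_of_forall_le_iff {P : Type*} [PartialOrder P] {I : Set P}
    (hI : IsInterval I) {Q : P → Prop} (hQ : ∀ x y, x ≤ y → x ∈ I → y ∈ I → (Q x ↔ Q y))
    {x z : P} (hx : x ∈ I) (hz : z ∈ I) : Q x ↔ Q z := by
  obtain ⟨n, c, rfl, rfl, hmem, hstep⟩ := hI.2.2 x z hx hz
  suffices ∀ i ≤ n, (Q (c 0) ↔ Q (c i)) from this n le_rfl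
  intro i
  induction i with
  | zero => exact fun _ => Iff.rfl
  | succ j ih =>
    intro hj
    refine (ih (by omega)).trans ?_
    rcases hstep j hj with hle | hle
    · exact hQ _ _ hle (hmem j (by omega)) (hmem (j + 1) hj)
    · exact (hQ _ _ hle (hmem (j + 1) hj) (hmem j (by omega))).symm
theorem stmt_10_general {R : Type*} [Ring R] {P : Type*} [PartialOrder P]
    (F : P → Type*) [∀ x, AddCommGroup (F x)] [∀ x, Module R (F x)]
    (Fmap : ∀ x y : P, x ≤ y → (F x →ₗ[R] F y))
    (I : Set P) (hI : IsInterval I)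
    (M : Type*) [AddCommGroup M] [Module R M]
    (hMne : Nontrivial M)
    (hMindec : ∀ (N L : Submodule R M), IsCompl N L → N = ⊥ ∨ L = ⊥)
    (hout : ∀ x, x ∉ I → Subsingleton (F x))
    (hiso : ∀ x, x ∈ I → Nonempty (F x ≃ₗ[R] M))
    (hbij : ∀ x y (h : x ≤ y), x ∈ I → y ∈ I → Function.Bijective (Fmap x y h)) :
    (∃ x, Nontrivial (F x)) ∧
    ∀ (G H : ∀ x, Submodule R (F x)),
      (∀ x y (h : x ≤ y), (G x).map (Fmap x y h) ≤ G y) →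
      (∀ x y (h : x ≤ y), (H x).map (Fmap x y h) ≤ H y) →
      (∀ x, IsCompl (G x) (H x)) →
      (∀ x, G x = ⊥) ∨ (∀ x, H x = ⊥) := by
  obtain ⟨x₀, hx₀⟩ := hI.1
  obtain ⟨e₀⟩ := hiso x₀ hx₀
  refine ⟨⟨x₀, e₀.toEquiv.nontrivial⟩, fun G H hG hH hGH => ?_⟩
  have vanish_everywhere (K : ∀ x, Submodule R (F x))
      (hK : ∀ x y (h : x ≤ y), x ∈ I → y ∈ I → (K x = ⊥ ↔ K y = ⊥)) (h₀ : K x₀ = ⊥) (z : P) :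
      K z = ⊥ := by
    by_cases hz : z ∈ I
    · exact (hI.iff_of_forall_le_iff hK hx₀ hz).1 h₀
    · have := hout z hz
      exact Submodule.eq_bot_of_subsingleton
  have hG_iff x y (h : x ≤ y) (hx : x ∈ I) (hy : y ∈ I) : G x = ⊥ ↔ G y = ⊥ :=
    Submodule.eq_bot_iff_of_isCompl_of_bijective (hbij x y h hx hy) (hGH x) (hGH y)
      (hG x y h) (hH x y h)
  have hH_iff x y (h : x ≤ y) (hx : x ∈ I) (hy : y ∈ I) : H x = ⊥ ↔ H y = ⊥ :=
    Submodule.eq_bot_iff_of_isCompl_of_bijective (hbij x y h hx hy) (hGH x).symm (hGH y).symm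
      (hH x y h) (hG x y h)
  exact (Submodule.eq_bot_or_eq_bot_of_isCompl_of_linearEquiv e₀ hMindec (hGH x₀)).imp
    (vanish_everywhere G hG_iff) (vanish_everywhere H hH_iff)

/-- A persistence module of projective constant type F(I, M), with M an
indecomposable projective module, is indecomposable: it is nonzero, and in
any internal direct sum decomposition F = G ⊕ H into persistence submodules,
one of the two factors vanishes. -/
theorem stmt_10 {R : Type*} [Ring R] {P : Type*} [PartialOrder P]
    (F : P → Type*) [∀ x, AddCommGroup (F x)] [∀ x, Module R (F x)]
    (Fmap : ∀ x y : P, x ≤ y → (F x →ₗ[R] F y))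
    (Fmap_id : ∀ x, Fmap x x le_rfl = LinearMap.id)
    (Fmap_comp : ∀ x y z (hxy : x ≤ y) (hyz : y ≤ z),
      (Fmap y z hyz).comp (Fmap x y hxy) = Fmap x z (hxy.trans hyz))
    (I : Set P) (hI : IsInterval I)
    (M : Type*) [AddCommGroup M] [Module R M]
    [Module.Projective R M]
    (hMne : Nontrivial M)
    (hMindec : ∀ (N L : Submodule R M), IsCompl N L → N = ⊥ ∨ L = ⊥)
    (hout : ∀ x, x ∉ I → Subsingleton (F x))
    (hiso : ∀ x, x ∈ I → Nonempty (F x ≃ₗ[R] M))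
    (hbij : ∀ x y (h : x ≤ y), x ∈ I → y ∈ I → Function.Bijective (Fmap x y h)) :
    (∃ x, Nontrivial (F x)) ∧
    ∀ (G H : ∀ x, Submodule R (F x)),
      (∀ x y (h : x ≤ y), (G x).map (Fmap x y h) ≤ G y) →
      (∀ x y (h : x ≤ y), (H x).map (Fmap x y h) ≤ H y) →
      (∀ x, IsCompl (G x) (H x)) →
      (∀ x, G x = ⊥) ∨ (∀ x, H x = ⊥) :=
  stmt_10_general F Fmap I hI M hMne hMindec hout hiso hbij
end

section
/- Let R be a Noetherian ring with identity and F : A₂ → R-Mod a persistence module consisting of a single map φ = F_{1,2} : F₁ → F₂ between finitely generated modules, such that F₁, F₂, and coker(φ) are projective. Then F decomposes as a direct sum of three persistence submodules: one supported on {1} with value ker(φ), one supported on {1,2} whose structure map is an isomorphism onto im(φ), and one supported on {2} with value a complement of im(φ) in F₂. In particular, ker(φ) and im(φ) are projective, F₁ = ker(φ) ⊕ G₁ with G₁ ≅ im(φ), and F₂ = im(φ) ⊕ G₂. -/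
/-!
A surjection onto a projective module splits, so its kernel has a complement mapped isomorphically
onto the target. Applied to `F₂ → coker φ` this makes `im φ` a direct summand of `F₂`, hence
projective; applied to `F₁ → im φ` it makes `ker φ` a direct summand of `F₁`, hence projective,
with a complement `G₁` that `φ` carries isomorphically onto `im φ`.
-/

open LinearMap Function

section

variable {R M N : Type*} [Ring R] [AddCommGroup M] [Module R M] [AddCommGroup N] [Module R N]

theorem Submodule.projective_of_isCompl [Module.Projective R M] {p q : Submodule R M}
    (h : IsCompl p q) : Module.Projective R p :=
  .of_split p.subtype (p.projectionOnto q h) (p.projectionOnto_comp_subtype h)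

namespace LinearMap

theorem isCompl_ker_range_of_comp_eq_id {f : M →ₗ[R] N} {g : N →ₗ[R] M} (h : f ∘ₗ g = id) :
    IsCompl (ker f) (range g) := by
  have hfg : ∀ y, f (g y) = y := fun y ↦ congr($h y)
  have hidem : IsIdempotentElem (g ∘ₗ f) := by
    ext x
    simp [hfg]
  have hrange : range (g ∘ₗ f) = range g :=
    range_comp_of_range_eq_top g (range_eq_top.mpr (LeftInverse.surjective hfg))
  have hker : ker (g ∘ₗ f) = ker f :=
    ker_comp_of_ker_eq_bot f (ker_eq_bot.mpr (LeftInverse.injective hfg))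
  simpa only [hrange, hker] using hidem.isCompl.symm

theorem exists_isCompl_ker_of_surjective [Module.Projective R N] {f : M →ₗ[R] N}
    (hf : Surjective f) : ∃ G : Submodule R M, IsCompl (ker f) G :=
  let ⟨g, hg⟩ := Module.projective_lifting_property f id hf
  ⟨range g, isCompl_ker_range_of_comp_eq_id hg⟩

theorem bijOn_range_of_isCompl_ker {f : M →ₗ[R] N} {G : Submodule R M} (h : IsCompl (ker f) G) :
    Set.BijOn f G (range f) := by
  have hmap : G.map f = range f := by
    rw [range_eq_map, ← h.sup_eq_top, Submodule.map_sup, le_ker_iff_map.mp le_rfl, bot_sup_eq]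
  rw [← hmap, Submodule.map_coe]
  exact (injOn_of_disjoint_ker le_rfl h.disjoint.symm).bijOn_image

end LinearMap

end

theorem stmt_13_general {R : Type*} [Ring R]
    {F₁ F₂ : Type*} [AddCommGroup F₁] [Module R F₁] [AddCommGroup F₂] [Module R F₂]
    [Module.Projective R F₁] [Module.Projective R F₂]
    (φ : F₁ →ₗ[R] F₂)
    (hcoker : Module.Projective R (F₂ ⧸ LinearMap.range φ)) :
    Module.Projective R (LinearMap.ker φ) ∧
    Module.Projective R (LinearMap.range φ) ∧
    ∃ G₁ : Submodule R F₁, ∃ G₂ : Submodule R F₂,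
      IsCompl (LinearMap.ker φ) G₁ ∧
      IsCompl (LinearMap.range φ) G₂ ∧
      Set.BijOn φ (G₁ : Set F₁) (LinearMap.range φ : Set F₂) ∧
      Nonempty (G₁ ≃ₗ[R] LinearMap.range φ) := by
  obtain ⟨G₂, hG₂⟩ : ∃ G₂ : Submodule R F₂, IsCompl (range φ) G₂ := by
    simpa only [Submodule.ker_mkQ] using
      (range φ).mkQ.exists_isCompl_ker_of_surjective (range φ).mkQ_surjective
  have hrange : Module.Projective R (range φ) := Submodule.projective_of_isCompl hG₂
  obtain ⟨G₁, hG₁⟩ : ∃ G₁ : Submodule R F₁, IsCompl (ker φ) G₁ := by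
    simpa only [ker_rangeRestrict] using
      φ.rangeRestrict.exists_isCompl_ker_of_surjective φ.surjective_rangeRestrict
  exact ⟨Submodule.projective_of_isCompl hG₁, hrange, G₁, G₂, hG₁, hG₂,
    φ.bijOn_range_of_isCompl_ker hG₁,
    ⟨(Submodule.quotientEquivOfIsCompl _ _ hG₁).symm ≪≫ₗ φ.quotKerEquivRange⟩⟩

/-- An A₂-persistence module (a single map φ : F₁ → F₂) with F₁, F₂, coker(φ)
projective decomposes into three summands: ker(φ) supported on {1}, a summand
mapped isomorphically onto im(φ) supported on {1,2}, and a complement of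
im(φ) supported on {2}. -/
theorem stmt_13 {R : Type*} [Ring R] [IsNoetherianRing R]
    {F₁ F₂ : Type*} [AddCommGroup F₁] [Module R F₁] [AddCommGroup F₂] [Module R F₂]
    [Module.Finite R F₁] [Module.Finite R F₂]
    [Module.Projective R F₁] [Module.Projective R F₂]
    (φ : F₁ →ₗ[R] F₂)
    (hcoker : Module.Projective R (F₂ ⧸ LinearMap.range φ)) :
    Module.Projective R (LinearMap.ker φ) ∧
    Module.Projective R (LinearMap.range φ) ∧
    ∃ G₁ : Submodule R F₁, ∃ G₂ : Submodule R F₂,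
      IsCompl (LinearMap.ker φ) G₁ ∧
      IsCompl (LinearMap.range φ) G₂ ∧
      Set.BijOn φ (G₁ : Set F₁) (LinearMap.range φ : Set F₂) ∧
      Nonempty (G₁ ≃ₗ[R] LinearMap.range φ) :=
  stmt_13_general φ hcoker
end

section
/- Let R be a Noetherian ring with identity and consider an A₃-persistence module F₁ →^{f} F₂ →^{g} F₃ of finitely generated modules with f injective, g surjective, all F_i projective, and such that coker(g∘f) = F₃/im(g∘f), F₂/im(f), and the quotient F₂/(im(f) + ker(g)) are projective. Then F₂ admits an internal direct sum decomposition F₂ = (im(f) ∩ ker(g)) ⊕ G ⊕ K ⊕ H such that im(f) = (im(f) ∩ ker(g)) ⊕ G, ker(g) = (im(f) ∩ ker(g)) ⊕ K, and g restricts to isomorphisms on H and G. -/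
/-!
A submodule with projective quotient is a direct summand, and each projective quotient in the
hypotheses produces one summand. `H` complements `im f ⊔ ker g` in `F₂`. `G` complements
`im f ⊓ ker g` in `im f`, because `im f / (im f ⊓ ker g) ≅ im (g ∘ f)` is a summand of the
projective module `F₃`. `K` complements `im f ⊓ ker g` in `ker g`, because
`ker g / (im f ⊓ ker g) ≅ (im f ⊔ ker g) / im f` is a submodule of the projective module `F₂ / im f`
with projective quotient `F₂ / (im f ⊔ ker g)`. Modularity of the submodule lattice makes the four
pieces independent, and `g` is injective on `G` and `H` because both meet `ker g` trivially.
-/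

theorem Disjoint.of_inf_of_le {α : Type*} [SemilatticeInf α] [OrderBot α] {a b c : α}
    (h : Disjoint (a ⊓ b) c) (hc : c ≤ a) : Disjoint b c :=
  fun _ hb hc' => h (le_inf (hc'.trans hc) hb) hc'

theorem iSupIndep_fin_four_of_disjoint {α : Type*} [CompleteLattice α] [IsModularLattice α]
    {a b c d : α} (hab : Disjoint a b) (habc : Disjoint (a ⊔ b) c)
    (habcd : Disjoint (a ⊔ b ⊔ c) d) : iSupIndep ![a, b, c, d] := by
  rw [iSupIndep_iff_supIndep_univ, show (Finset.univ : Finset (Fin 4)) = {3, 2, 1, 0} by decide]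
  refine .insert (.insert (.insert (Finset.supIndep_singleton _ _) ?_) ?_) ?_
  · simpa using hab.symm
  · simpa [sup_comm] using habc.symm
  · simpa [sup_comm, sup_left_comm] using habcd.symm

theorem iSup_fin_four {α : Type*} [CompleteLattice α] (a b c d : α) :
    ⨆ i, ![a, b, c, d] i = a ⊔ b ⊔ c ⊔ d := by
  rw [← Finset.sup_univ_eq_iSup, show (Finset.univ : Finset (Fin 4)) = {0, 1, 2, 3} by decide]
  simp [sup_assoc]

theorem iSupIndep_inf_of_isCompl_sup {α : Type*} [CompleteLattice α] [IsModularLattice α]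
    {a b c d e : α} (hc : Disjoint (a ⊓ b) c) (hac : a ⊓ b ⊔ c = a)
    (hd : Disjoint (a ⊓ b) d) (hbd : a ⊓ b ⊔ d = b) (he : IsCompl (a ⊔ b) e) :
    iSupIndep ![a ⊓ b, c, d, e] ∧ ⨆ i, ![a ⊓ b, c, d, e] i = ⊤ := by
  have hdb : d ≤ b := hbd ▸ le_sup_right
  have hab : a ⊔ d = a ⊔ b := by rw [← hbd, ← sup_assoc, sup_inf_self]
  refine ⟨iSupIndep_fin_four_of_disjoint hc ?_ ?_, ?_⟩
  · rw [hac]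
    exact (inf_comm a b ▸ hd).of_inf_of_le hdb
  · rw [hac, hab]
    exact he.disjoint
  · rw [iSup_fin_four, hac, hab, he.sup_eq_top]

namespace Submodule

variable {R M M' : Type*} [Ring R] [AddCommGroup M] [Module R M] [AddCommGroup M'] [Module R M']

theorem projective_of_projective_quotient [Module.Projective R M] (p : Submodule R M)
    [Module.Projective R (M ⧸ p)] : Module.Projective R p :=
  have ⟨q, hpq⟩ := p.exists_isCompl_of_projective_quotient
  .of_split p.subtype (p.projectionOnto q hpq)
    (by ext; simp [projectionOnto_apply_left])

theorem projective_quotient_comap_ker (g : M →ₗ[R] M') (q : Submodule R M)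
    [Module.Projective R (q.map g)] :
    Module.Projective R (q ⧸ (LinearMap.ker g).comap q.subtype) := by
  have e := (g ∘ₗ q.subtype).quotKerEquivRange
  rw [LinearMap.ker_comp, LinearMap.range_comp, range_subtype] at e
  exact .of_equiv e.symm

theorem projective_quotient_comap_of_projective_quotient_sup (p q : Submodule R M)
    [Module.Projective R (M ⧸ p)] [Module.Projective R (M ⧸ (p ⊔ q))] :
    Module.Projective R (q ⧸ p.comap q.subtype) := by
  have : Module.Projective R ((M ⧸ p) ⧸ q.map p.mkQ) :=
    .of_equiv (quotientQuotientEquivQuotientSup p q).symm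
  have : Module.Projective R (q.map p.mkQ) := projective_of_projective_quotient _
  have := projective_quotient_comap_ker p.mkQ q
  rwa [ker_mkQ] at this

theorem exists_disjoint_inf_sup_eq_of_projective_quotient (p q : Submodule R M)
    [Module.Projective R (q ⧸ p.comap q.subtype)] :
    ∃ r : Submodule R M, Disjoint (q ⊓ p) r ∧ q ⊓ p ⊔ r = q := by
  obtain ⟨r, hr⟩ := (p.comap q.subtype).exists_isCompl_of_projective_quotient
  refine ⟨r.map q.subtype, ?_, ?_⟩
  · rw [← map_comap_subtype]
    exact disjoint_map q.injective_subtype hr.disjoint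
  · rw [← map_comap_subtype, ← map_sup, hr.sup_eq_top, map_top, range_subtype]

end Submodule

theorem stmt_14_general {R : Type*} [Ring R]
    {F₁ F₂ F₃ : Type*} [AddCommGroup F₁] [Module R F₁] [AddCommGroup F₂] [Module R F₂]
    [AddCommGroup F₃] [Module R F₃]
    [Module.Projective R F₃]
    (f : F₁ →ₗ[R] F₂) (g : F₂ →ₗ[R] F₃)
    (hcoker₁ : Module.Projective R (F₃ ⧸ LinearMap.range (g ∘ₗ f)))
    (hcoker₂ : Module.Projective R (F₂ ⧸ LinearMap.range f))
    (hcoker₃ : Module.Projective R (F₂ ⧸ (LinearMap.range f ⊔ LinearMap.ker g))) :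
    ∃ G K H : Submodule R F₂,
      DirectSum.IsInternal ![LinearMap.range f ⊓ LinearMap.ker g, G, K, H] ∧
      LinearMap.range f = (LinearMap.range f ⊓ LinearMap.ker g) ⊔ G ∧
      LinearMap.ker g = (LinearMap.range f ⊓ LinearMap.ker g) ⊔ K ∧
      Set.InjOn g (H : Set F₂) ∧ Set.InjOn g (G : Set F₂) := by
  have : Module.Projective R ((LinearMap.range f).map g) := by
    rw [← LinearMap.range_comp]
    exact Submodule.projective_of_projective_quotient _
  have := Submodule.projective_quotient_comap_ker g (LinearMap.range f)
  have := Submodule.projective_quotient_comap_of_projective_quotient_sup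
    (LinearMap.range f) (LinearMap.ker g)
  obtain ⟨G, hG, hfG⟩ :=
    Submodule.exists_disjoint_inf_sup_eq_of_projective_quotient (LinearMap.ker g) (LinearMap.range f)
  obtain ⟨K, hK, hgK⟩ :=
    Submodule.exists_disjoint_inf_sup_eq_of_projective_quotient (LinearMap.range f) (LinearMap.ker g)
  obtain ⟨H, hH⟩ := (LinearMap.range f ⊔ LinearMap.ker g).exists_isCompl_of_projective_quotient
  rw [inf_comm] at hK hgK
  obtain ⟨hindep, hsup⟩ := iSupIndep_inf_of_isCompl_sup hG hfG hK hgK hH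
  refine ⟨G, K, H, DirectSum.isInternal_submodule_of_iSupIndep_of_iSup_eq_top hindep hsup,
    hfG.symm, hgK.symm, g.injOn_of_disjoint_ker subset_rfl ?_,
    g.injOn_of_disjoint_ker subset_rfl ?_⟩
  · exact hH.disjoint.symm.mono_right le_sup_right
  · exact (hG.of_inf_of_le (hfG ▸ le_sup_right)).symm

/-- Case 1 of the A₃ decomposition: F₁ →f F₂ →g F₃ with f injective and g
surjective. F₂ decomposes as (im f ∩ ker g) ⊕ G ⊕ K ⊕ H with
im f = (im f ∩ ker g) ⊕ G, ker g = (im f ∩ ker g) ⊕ K, and g restricting to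
isomorphisms (injections onto their images) on H and G. -/
theorem stmt_14 {R : Type*} [Ring R] [IsNoetherianRing R]
    {F₁ F₂ F₃ : Type*} [AddCommGroup F₁] [Module R F₁] [AddCommGroup F₂] [Module R F₂]
    [AddCommGroup F₃] [Module R F₃]
    [Module.Finite R F₁] [Module.Finite R F₂] [Module.Finite R F₃]
    [Module.Projective R F₁] [Module.Projective R F₂] [Module.Projective R F₃]
    (f : F₁ →ₗ[R] F₂) (g : F₂ →ₗ[R] F₃)
    (hf : Function.Injective f) (hg : Function.Surjective g)
    (hcoker₁ : Module.Projective R (F₃ ⧸ LinearMap.range (g ∘ₗ f)))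
    (hcoker₂ : Module.Projective R (F₂ ⧸ LinearMap.range f))
    (hcoker₃ : Module.Projective R (F₂ ⧸ (LinearMap.range f ⊔ LinearMap.ker g))) :
    ∃ G K H : Submodule R F₂,
      DirectSum.IsInternal ![LinearMap.range f ⊓ LinearMap.ker g, G, K, H] ∧
      LinearMap.range f = (LinearMap.range f ⊓ LinearMap.ker g) ⊔ G ∧
      LinearMap.ker g = (LinearMap.range f ⊓ LinearMap.ker g) ⊔ K ∧
      Set.InjOn g (H : Set F₂) ∧ Set.InjOn g (G : Set F₂) :=
  stmt_14_general f g hcoker₁ hcoker₂ hcoker₃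
end

section
/- Let R be a Noetherian ring with identity and let g : F₂ → F₁ and h : F₂ → F₃ be surjective homomorphisms of finitely generated projective R-modules such that F₂/(ker(g) + ker(h)) is projective. Then ker(g)/(ker(g) ∩ ker(h)) and ker(h)/(ker(g) ∩ ker(h)) are projective, and F₂ admits an internal direct sum decomposition F₂ = (ker(g) ∩ ker(h)) ⊕ G ⊕ K ⊕ H with ker(g) = (ker(g) ∩ ker(h)) ⊕ G, ker(h) = (ker(g) ∩ ker(h)) ⊕ K, F₁ ≅ K ⊕ H, and F₃ ≅ G ⊕ H. -/
/-!
The image of `ker g` in `F₂ ⧸ ker h ≅ F₃` is `ker g ⧸ (ker g ∩ ker h)`, and the quotient of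
`F₂ ⧸ ker h` by it is `F₂ ⧸ (ker g + ker h)`. Both being projective, the image is a direct summand
of a projective module, hence projective; symmetrically for `ker h`. A projective quotient splits,
which yields complements `G` of `ker g ∩ ker h` in `ker g`, `K` of it in `ker h` and `H` of
`ker g + ker h` in `F₂`. By modularity of the submodule lattice, `K ⊕ H` is then a complement of
`ker g`, so `F₁ ≅ F₂ ⧸ ker g ≅ K × H`, and likewise `F₃ ≅ G × H`.
-/

open LinearMap Submodule

section ModularLattice

variable {α : Type*} [CompleteLattice α]

theorem iSup_vecCons {n : ℕ} (a : α) (f : Fin n → α) :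
    ⨆ i, Matrix.vecCons a f i = a ⊔ ⨆ i, f i := by
  refine le_antisymm (iSup_le fun i => ?_) (sup_le (le_iSup_of_le 0 le_rfl) ?_)
  · cases i using Fin.cases with
    | zero => exact le_sup_left
    | succ i => exact le_sup_of_le_right (le_iSup_of_le i le_rfl)
  · exact iSup_le fun i => le_iSup_of_le i.succ le_rfl

variable [IsModularLattice α]

theorem iSupIndep.vecCons {n : ℕ} {f : Fin n → α} {a : α} (hf : iSupIndep f)
    (ha : Disjoint a (⨆ i, f i)) : iSupIndep (Matrix.vecCons a f) := by
  rw [iSupIndep_def]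
  intro i
  cases i using Fin.cases with
  | zero =>
    refine ha.mono_right (iSup₂_le fun j hj => ?_)
    cases j using Fin.cases with
    | zero => exact absurd rfl hj
    | succ j => exact le_iSup_of_le j le_rfl
  | succ i =>
    have hfi : Disjoint (f i ⊔ ⨆ (j) (_ : j ≠ i), f j) a :=
      ha.symm.mono_left (sup_le (le_iSup f i) (iSup₂_le fun j _ => le_iSup f j))
    refine ((hf i).disjoint_sup_right_of_disjoint_sup_left hfi).mono_right
      (iSup₂_le fun j hj => ?_)
    cases j using Fin.cases with
    | zero => exact le_sup_right
    | succ j =>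
      exact le_sup_of_le_left (le_iSup₂_of_le j (fun h => hj (congrArg Fin.succ h)) le_rfl)

theorem isCompl_sup_of_disjoint_inf_of_inf_sup_eq {S T K H : α} (hK : Disjoint (S ⊓ T) K)
    (hKT : S ⊓ T ⊔ K = T) (hH : IsCompl (S ⊔ T) H) : IsCompl S (K ⊔ H) := by
  have hSK : S ⊔ K = S ⊔ T := by rw [← hKT, ← sup_assoc, sup_inf_self]
  have hKT' : K ≤ T := hKT ▸ le_sup_right
  have hdisj : Disjoint S K := by
    rw [disjoint_iff, ← inf_eq_right.mpr hKT', ← inf_assoc]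
    exact hK.eq_bot
  exact hdisj.isCompl_sup_right_of_isCompl_sup_left (hSK ▸ hH)

end ModularLattice

section Module

variable {R M : Type*} [Ring R] [AddCommGroup M] [Module R M]

theorem Submodule.exists_isCompl_of_projective_quotient_s16 (p : Submodule R M)
    [Module.Projective R (M ⧸ p)] : ∃ q, IsCompl p q := by
  obtain ⟨s, hs⟩ := p.mkQ.exists_rightInverse_of_surjective p.range_mkQ
  have hs' : ∀ x, p.mkQ (s x) = x := LinearMap.congr_fun hs
  refine ⟨range s, disjoint_def.mpr fun x hp hr => ?_,
    codisjoint_iff.mpr (eq_top_iff.mpr fun x _ => ?_)⟩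
  · obtain ⟨y, rfl⟩ := mem_range.mp hr
    have hy : y = 0 := by rw [← hs' y]; exact (Quotient.mk_eq_zero p).mpr hp
    rw [hy, map_zero]
  · refine mem_sup.mpr
      ⟨x - s (p.mkQ x), ?_, s (p.mkQ x), mem_range_self s _, sub_add_cancel _ _⟩
    rw [← Quotient.mk_eq_zero, ← mkQ_apply, map_sub, hs', sub_self]

theorem Submodule.projective_of_projective_quotient_s16 [Module.Projective R M] (p : Submodule R M)
    [Module.Projective R (M ⧸ p)] : Module.Projective R p :=
  have ⟨q, h⟩ := p.exists_isCompl_of_projective_quotient_s16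
  .of_split p.subtype (p.projectionOnto q h) (p.projectionOnto_comp_subtype h)

theorem Submodule.exists_disjoint_sup_eq_of_projective_quotient {N S : Submodule R M}
    (hNS : N ≤ S) [Module.Projective R (S ⧸ N.comap S.subtype)] :
    ∃ G, Disjoint N G ∧ N ⊔ G = S := by
  obtain ⟨G, hG⟩ := (N.comap S.subtype).exists_isCompl_of_projective_quotient_s16
  have hN : (N.comap S.subtype).map S.subtype = N := by
    rw [map_comap_subtype, inf_of_le_right hNS]
  refine ⟨G.map S.subtype, hN ▸ disjoint_map S.injective_subtype hG.disjoint, ?_⟩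
  rw [← hN, ← map_sup, hG.sup_eq_top, map_top, range_subtype]

noncomputable def Submodule.prodEquivSupOfDisjoint {p q : Submodule R M} (h : Disjoint p q) :
    (p × q) ≃ₗ[R] ↥(p ⊔ q) :=
  (LinearEquiv.ofInjective (p.subtype.coprod q.subtype) (by
    rw [← ker_eq_bot, ker_coprod_of_disjoint_range, ker_subtype, ker_subtype, prod_bot]
    rwa [range_subtype, range_subtype])).trans (LinearEquiv.ofEq _ _ (sup_eq_range p q).symm)

theorem Submodule.projective_quotient_comap_inf (p q : Submodule R M)
    [Module.Projective R (M ⧸ q)] [Module.Projective R (M ⧸ (p ⊔ q))] :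
    Module.Projective R (p ⧸ (p ⊓ q).comap p.subtype) := by
  let W := p.map q.mkQ
  have : Module.Projective R ((M ⧸ q) ⧸ W) :=
    .of_equiv ((quotientQuotientEquivQuotientSup q p).trans (quotEquivOfEq _ _ (sup_comm q p))).symm
  have := W.projective_of_projective_quotient_s16
  have hker : ker (q.mkQ ∘ₗ p.subtype) = (p ⊓ q).comap p.subtype := by
    rw [ker_comp, ker_mkQ, comap_inf, comap_subtype_self, top_inf_eq]
  have hrange : range (q.mkQ ∘ₗ p.subtype) = W := by
    rw [range_comp, range_subtype]
  exact .of_equiv ((quotEquivOfEq _ _ hker.symm).trans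
    ((q.mkQ ∘ₗ p.subtype).quotKerEquivRange.trans (LinearEquiv.ofEq _ _ hrange))).symm

theorem DirectSum.isInternal_of_disjoint_of_isCompl_sup {a b c d : Submodule R M}
    (hab : Disjoint a b) (hcd : Disjoint c d) (h : IsCompl (a ⊔ b) (c ⊔ d)) :
    DirectSum.IsInternal ![a, b, c, d] := by
  rw [DirectSum.isInternal_submodule_iff_iSupIndep_and_iSup_eq_top]
  refine ⟨.vecCons (.vecCons (.vecCons (iSupIndep_subsingleton _) ?_) ?_) ?_, ?_⟩
  · simpa [iSup_vecCons] using hcd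
  · simpa [iSup_vecCons] using h.disjoint.mono_left le_sup_right
  · simpa [iSup_vecCons] using hab.disjoint_sup_right_of_disjoint_sup_left h.disjoint
  · simpa [iSup_vecCons, sup_assoc] using h.sup_eq_top

end Module

theorem stmt_16_general {R : Type*} [Ring R]
    {F₁ F₂ F₃ : Type*} [AddCommGroup F₁] [Module R F₁] [AddCommGroup F₂] [Module R F₂]
    [AddCommGroup F₃] [Module R F₃]
    [Module.Projective R F₁] [Module.Projective R F₃]
    (g : F₂ →ₗ[R] F₁) (h : F₂ →ₗ[R] F₃)
    (hg : Function.Surjective g) (hh : Function.Surjective h)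
    (hcoker : Module.Projective R (F₂ ⧸ (LinearMap.ker g ⊔ LinearMap.ker h))) :
    Module.Projective R (↥(LinearMap.ker g) ⧸
      ((LinearMap.ker g ⊓ LinearMap.ker h).comap (LinearMap.ker g).subtype)) ∧
    Module.Projective R (↥(LinearMap.ker h) ⧸
      ((LinearMap.ker g ⊓ LinearMap.ker h).comap (LinearMap.ker h).subtype)) ∧
    ∃ G K H : Submodule R F₂,
      DirectSum.IsInternal ![LinearMap.ker g ⊓ LinearMap.ker h, G, K, H] ∧
      LinearMap.ker g = (LinearMap.ker g ⊓ LinearMap.ker h) ⊔ G ∧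
      LinearMap.ker h = (LinearMap.ker g ⊓ LinearMap.ker h) ⊔ K ∧
      Nonempty (F₁ ≃ₗ[R] (K × H)) ∧ Nonempty (F₃ ≃ₗ[R] (G × H)) := by
  have : Module.Projective R (F₂ ⧸ ker g) := .of_equiv (g.quotKerEquivOfSurjective hg).symm
  have : Module.Projective R (F₂ ⧸ ker h) := .of_equiv (h.quotKerEquivOfSurjective hh).symm
  have hT : Module.Projective R (ker h ⧸ (ker g ⊓ ker h).comap (ker h).subtype) := by
    have : Module.Projective R (F₂ ⧸ (ker h ⊔ ker g)) := sup_comm (ker g) (ker h) ▸ hcoker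
    rw [inf_comm]
    exact projective_quotient_comap_inf _ _
  have hS := projective_quotient_comap_inf (ker g) (ker h)
  obtain ⟨G, hNG, hG⟩ := exists_disjoint_sup_eq_of_projective_quotient
    (inf_le_left : ker g ⊓ ker h ≤ ker g)
  obtain ⟨K, hNK, hK⟩ := exists_disjoint_sup_eq_of_projective_quotient
    (inf_le_right : ker g ⊓ ker h ≤ ker h)
  obtain ⟨H, hH⟩ := (ker g ⊔ ker h).exists_isCompl_of_projective_quotient_s16
  have hgKH : IsCompl (ker g) (K ⊔ H) := isCompl_sup_of_disjoint_inf_of_inf_sup_eq hNK hK hH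
  have hhGH : IsCompl (ker h) (G ⊔ H) := by
    rw [inf_comm] at hNG hG
    exact isCompl_sup_of_disjoint_inf_of_inf_sup_eq hNG hG (sup_comm (ker g) (ker h) ▸ hH)
  have hKH : Disjoint K H := hH.disjoint.mono_left (hK ▸ le_sup_right.trans le_sup_right)
  have hGH : Disjoint G H := hH.disjoint.mono_left (hG ▸ le_sup_right.trans le_sup_left)
  refine ⟨hS, hT, G, K, H, ?_, hG.symm, hK.symm,
    ⟨(g.quotKerEquivOfSurjective hg).symm ≪≫ₗ quotientEquivOfIsCompl _ _ hgKH ≪≫ₗ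
      (prodEquivSupOfDisjoint hKH).symm⟩,
    ⟨(h.quotKerEquivOfSurjective hh).symm ≪≫ₗ quotientEquivOfIsCompl _ _ hhGH ≪≫ₗ
      (prodEquivSupOfDisjoint hGH).symm⟩⟩
  exact DirectSum.isInternal_of_disjoint_of_isCompl_sup hNG hKH (by rwa [hG])

/-- Case 3 of the A₃ decomposition: two surjections g : F₂ → F₁ and
h : F₂ → F₃ with F₂/(ker g + ker h) projective.  The subquotients
ker g/(ker g ∩ ker h) and ker h/(ker g ∩ ker h) are projective, and
F₂ = (ker g ∩ ker h) ⊕ G ⊕ K ⊕ H with ker g = (ker g ∩ ker h) ⊕ G,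
ker h = (ker g ∩ ker h) ⊕ K, F₁ ≅ K ⊕ H and F₃ ≅ G ⊕ H. -/
theorem stmt_16 {R : Type*} [Ring R] [IsNoetherianRing R]
    {F₁ F₂ F₃ : Type*} [AddCommGroup F₁] [Module R F₁] [AddCommGroup F₂] [Module R F₂]
    [AddCommGroup F₃] [Module R F₃]
    [Module.Finite R F₁] [Module.Finite R F₂] [Module.Finite R F₃]
    [Module.Projective R F₁] [Module.Projective R F₂] [Module.Projective R F₃]
    (g : F₂ →ₗ[R] F₁) (h : F₂ →ₗ[R] F₃)
    (hg : Function.Surjective g) (hh : Function.Surjective h)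
    (hcoker : Module.Projective R (F₂ ⧸ (LinearMap.ker g ⊔ LinearMap.ker h))) :
    Module.Projective R (↥(LinearMap.ker g) ⧸
      ((LinearMap.ker g ⊓ LinearMap.ker h).comap (LinearMap.ker g).subtype)) ∧
    Module.Projective R (↥(LinearMap.ker h) ⧸
      ((LinearMap.ker g ⊓ LinearMap.ker h).comap (LinearMap.ker h).subtype)) ∧
    ∃ G K H : Submodule R F₂,
      DirectSum.IsInternal ![LinearMap.ker g ⊓ LinearMap.ker h, G, K, H] ∧
      LinearMap.ker g = (LinearMap.ker g ⊓ LinearMap.ker h) ⊔ G ∧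
      LinearMap.ker h = (LinearMap.ker g ⊓ LinearMap.ker h) ⊔ K ∧
      Nonempty (F₁ ≃ₗ[R] (K × H)) ∧ Nonempty (F₃ ≃ₗ[R] (G × H)) :=
  stmt_16_general g h hg hh hcoker
end

section
/- Let P be a totally ordered poset and F : P → R-Mod a persistence module such that the cokernel of every structure map F_{x,y} is projective. If F = G ⊕ H is an internal direct sum decomposition into persistence submodules, then the cokernels of all structure maps G_{x,y} and H_{x,y} are also projective. -/
/-!
If `f : A → B` maps `Gx ⊕ Hx = A` into `Gy ⊕ Hy = B` summandwise, then the projection of `B`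
onto `Gy` carries `range f` into `range (f|Gx)`. Hence inclusion and projection descend to maps
`Gy ⧸ range (f|Gx) → B ⧸ range f → Gy ⧸ range (f|Gx)` composing to the identity, so the cokernel
of `f|Gx` is a retract of the cokernel of `f` and inherits projectivity.
-/

open Submodule

section

variable {R A B : Type*} [Ring R] [AddCommGroup A] [Module R A] [AddCommGroup B] [Module R B]
  {f : A →ₗ[R] B} {Gx Hx : Submodule R A} {Gy Hy : Submodule R B}

theorem projectionOnto_comp_eq_restrict_comp_projectionOnto (hx : IsCompl Gx Hx)
    (hy : IsCompl Gy Hy) (hG : ∀ a ∈ Gx, f a ∈ Gy) (hH : ∀ a ∈ Hx, f a ∈ Hy) :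
    Gy.projectionOnto Hy hy ∘ₗ f = f.restrict hG ∘ₗ Gx.projectionOnto Hx hx := by
  refine LinearMap.ext_on_codisjoint hx.codisjoint (fun a ha => ?_) (fun a ha => ?_)
  · simp [projectionOnto_apply_of_mem_left hy (hG a ha), projectionOnto_apply_of_mem_left hx ha]
    rfl
  · simp [projectionOnto_apply_of_mem_right hy (hH a ha), projectionOnto_apply_of_mem_right hx ha]

theorem range_le_comap_projectionOnto_range_restrict (hx : IsCompl Gx Hx) (hy : IsCompl Gy Hy)
    (hG : ∀ a ∈ Gx, f a ∈ Gy) (hH : ∀ a ∈ Hx, f a ∈ Hy) :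
    LinearMap.range f ≤ (LinearMap.range (f.restrict hG)).comap (Gy.projectionOnto Hy hy) := by
  rw [← map_le_iff_le_comap, ← LinearMap.range_comp,
    projectionOnto_comp_eq_restrict_comp_projectionOnto hx hy hG hH]
  exact LinearMap.range_comp_le_range _ _

theorem range_restrict_le_comap_subtype_range (hG : ∀ a ∈ Gx, f a ∈ Gy) :
    LinearMap.range (f.restrict hG) ≤ (LinearMap.range f).comap Gy.subtype := by
  rintro _ ⟨a, rfl⟩
  exact ⟨a, rfl⟩

theorem Module.Projective.quotient_range_restrict_of_isCompl
    [Module.Projective R (B ⧸ LinearMap.range f)] (hx : IsCompl Gx Hx) (hy : IsCompl Gy Hy)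
    (hG : ∀ a ∈ Gx, f a ∈ Gy) (hH : ∀ a ∈ Hx, f a ∈ Hy) :
    Module.Projective R (Gy ⧸ LinearMap.range (f.restrict hG)) := by
  refine Module.Projective.of_split
    (mapQ _ _ Gy.subtype (range_restrict_le_comap_subtype_range hG))
    (mapQ _ _ _ (range_le_comap_projectionOnto_range_restrict hx hy hG hH)) ?_
  ext b
  simp

end

theorem stmt_17_general {R : Type*} [Ring R] {P : Type*} [LinearOrder P]
    (F : P → Type*) [∀ x, AddCommGroup (F x)] [∀ x, Module R (F x)]
    (Fmap : ∀ x y : P, x ≤ y → (F x →ₗ[R] F y))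
    (hcoker : ∀ x y (h : x ≤ y),
      Module.Projective R (F y ⧸ LinearMap.range (Fmap x y h)))
    (G H : ∀ x, Submodule R (F x))
    (hGH : ∀ x, IsCompl (G x) (H x))
    (hG : ∀ x y (h : x ≤ y), ∀ a ∈ G x, Fmap x y h a ∈ G y)
    (hH : ∀ x y (h : x ≤ y), ∀ a ∈ H x, Fmap x y h a ∈ H y) :
    (∀ x y (h : x ≤ y), Module.Projective R
      (↥(G y) ⧸ LinearMap.range ((Fmap x y h).restrict (hG x y h)))) ∧
    (∀ x y (h : x ≤ y), Module.Projective R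
      (↥(H y) ⧸ LinearMap.range ((Fmap x y h).restrict (hH x y h)))) := by
  refine ⟨fun x y h => ?_, fun x y h => ?_⟩ <;> have := hcoker x y h
  · exact .quotient_range_restrict_of_isCompl (hGH x) (hGH y) (hG x y h) (hH x y h)
  · exact .quotient_range_restrict_of_isCompl (hGH x).symm (hGH y).symm (hH x y h) (hG x y h)

/-- If all structure maps of a totally ordered persistence module F have
projective cokernels and F = G ⊕ H is an internal direct sum of persistence
submodules, then all structure maps of G and H have projective cokernels. -/
theorem stmt_17 {R : Type*} [Ring R] {P : Type*} [LinearOrder P]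
    (F : P → Type*) [∀ x, AddCommGroup (F x)] [∀ x, Module R (F x)]
    (Fmap : ∀ x y : P, x ≤ y → (F x →ₗ[R] F y))
    (Fmap_id : ∀ x, Fmap x x le_rfl = LinearMap.id)
    (Fmap_comp : ∀ x y z (hxy : x ≤ y) (hyz : y ≤ z),
      (Fmap y z hyz).comp (Fmap x y hxy) = Fmap x z (hxy.trans hyz))
    (hcoker : ∀ x y (h : x ≤ y),
      Module.Projective R (F y ⧸ LinearMap.range (Fmap x y h)))
    (G H : ∀ x, Submodule R (F x))
    (hGH : ∀ x, IsCompl (G x) (H x))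
    (hG : ∀ x y (h : x ≤ y), ∀ a ∈ G x, Fmap x y h a ∈ G y)
    (hH : ∀ x y (h : x ≤ y), ∀ a ∈ H x, Fmap x y h a ∈ H y) :
    (∀ x y (h : x ≤ y), Module.Projective R
      (↥(G y) ⧸ LinearMap.range ((Fmap x y h).restrict (hG x y h)))) ∧
    (∀ x y (h : x ≤ y), Module.Projective R
      (↥(H y) ⧸ LinearMap.range ((Fmap x y h).restrict (hH x y h)))) :=
  stmt_17_general F Fmap hcoker G H hGH hG hH
end

section
/- Let R be a Noetherian ring with identity, P a totally ordered poset, and F : P → R-Mod a pointwise finitely generated persistence module such that for every x ≤ y the module F_x is projective and coker(F_{x,y}) is projective. Then for any fixed z ∈ P, the chain of images {im(F_{x,z}) : x ≤ z} and the chain of kernels {ker(F_{z,y}) : y ≥ z} are both finite sets of submodules of F_z. -/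
/-!
Each image `im F_{x,z}` has projective cokernel, and each kernel `ker F_{z,y}` is the kernel of a
map onto the summand `im F_{z,y}` of the projective module `F_y`; so both chains consist of direct
summands of the Noetherian module `F_z`. In a modular lattice with the ascending chain condition,
direct summands also satisfy the descending chain condition: along a strictly descending chain of
summands one can choose complements that strictly increase. A chain that is well-founded in both
directions is finite.
-/

open LinearMap Submodule

section ModularLattice

variable {α : Type*} [Lattice α] [BoundedOrder α] [IsModularLattice α]

theorem IsCompl.exists_isCompl_ge_of_le {a b c : α} (hac : IsCompl a c) (hba : b ≤ a)
    (hb : IsComplemented b) : ∃ c', IsCompl b c' ∧ c ≤ c' := by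
  obtain ⟨d, hbd⟩ := hb
  have hsup : b ⊔ d ⊓ a = a := by rw [← sup_inf_assoc_of_le d hba, hbd.sup_eq_top, top_inf_eq]
  have hdisj : Disjoint b (d ⊓ a) := hbd.disjoint.mono_right inf_le_left
  rw [← hsup] at hac
  exact ⟨d ⊓ a ⊔ c, hdisj.isCompl_sup_right_of_isCompl_sup_left hac, le_sup_right⟩

theorem IsCompl.eq_of_le_of_isCompl {a b c : α} (hac : IsCompl a c) (hbc : IsCompl b c)
    (hba : b ≤ a) : b = a :=
  eq_of_le_of_inf_le_of_sup_le hba (by rw [hac.inf_eq_bot]; exact bot_le)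
    (by rw [hac.sup_eq_top, hbc.sup_eq_top])

instance Complementeds.wellFoundedLT [WellFoundedGT α] : WellFoundedLT (Complementeds α) := by
  refine ⟨wellFounded_iff_isEmpty_descending_chain.2 ⟨fun ⟨f, hf⟩ => ?_⟩⟩
  choose g hg using fun n (c : {c // IsCompl (f n : α) c}) =>
    c.2.exists_isCompl_ge_of_le (hf n).le (f (n + 1)).2
  -- complements of the `f n` that increase with `n`
  let c : ∀ n, {c // IsCompl (f n : α) c} := fun n =>
    Nat.rec ⟨_, (f 0).2.choose_spec⟩ (fun n c => ⟨g n c, (hg n c).1⟩) n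
  obtain ⟨n, hn⟩ := WellFounded.not_rel_apply_succ (r := (· > ·)) (fun n => (c n).1)
  refine hn (lt_of_le_of_ne (hg n (c n)).2 fun h => (hf n).ne ?_)
  exact Subtype.ext ((c n).2.eq_of_le_of_isCompl (h ▸ (hg n (c n)).1) (hf n).le)

theorem IsChain.finite_of_isComplemented [WellFoundedGT α] {s : Set α}
    (hs : IsChain (· ≤ ·) s) (hc : ∀ a ∈ s, IsComplemented a) : s.Finite := by
  classical
  let := hs.linearOrder
  have hι : StrictMono fun a : s => (⟨a, hc a a.2⟩ : Complementeds α) := fun _ _ h => h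
  have := hι.wellFoundedLT
  have := Finite.of_wellFoundedLT_wellFoundedGT s
  exact s.toFinite

end ModularLattice

section Projective

variable {R M N : Type*} [Ring R] [AddCommGroup M] [Module R M] [AddCommGroup N] [Module R N]

theorem LinearMap.isCompl_ker_range_of_comp_eq_id_s18 {f : M →ₗ[R] N} {s : N →ₗ[R] M}
    (h : f ∘ₗ s = LinearMap.id) : IsCompl (ker f) (range s) := by
  have hfs : ∀ y, f (s y) = y := LinearMap.congr_fun h
  refine ⟨disjoint_def.2 ?_, codisjoint_iff.2 (eq_top_iff.2 fun x _ => ?_)⟩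
  · rintro _ hx ⟨y, rfl⟩
    rw [mem_ker, hfs] at hx
    rw [hx, map_zero]
  · refine mem_sup.2 ⟨x - s (f x), ?_, s (f x), mem_range_self s _, sub_add_cancel x _⟩
    rw [mem_ker, map_sub, hfs, sub_self]

theorem LinearMap.isComplemented_ker_of_projective_range (f : M →ₗ[R] N)
    [Module.Projective R (range f)] : IsComplemented (ker f) := by
  obtain ⟨s, hs⟩ := f.rangeRestrict.exists_rightInverse_of_surjective f.range_rangeRestrict
  exact ⟨_, f.ker_rangeRestrict ▸ isCompl_ker_range_of_comp_eq_id_s18 hs⟩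

theorem Submodule.isComplemented_of_projective_quotient_s18 (p : Submodule R M)
    [Module.Projective R (M ⧸ p)] : IsComplemented p := by
  obtain ⟨s, hs⟩ := p.mkQ.exists_rightInverse_of_surjective p.range_mkQ
  exact ⟨_, p.ker_mkQ ▸ isCompl_ker_range_of_comp_eq_id_s18 hs⟩

theorem Submodule.projective_of_isComplemented [Module.Projective R M] {p : Submodule R M}
    (hp : IsComplemented p) : Module.Projective R p :=
  let ⟨q, hpq⟩ := hp
  .of_split p.subtype (p.projectionOnto q hpq) (by ext; simp)

theorem LinearMap.isComplemented_ker_of_projective_coker [Module.Projective R N] (f : M →ₗ[R] N)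
    [Module.Projective R (N ⧸ range f)] : IsComplemented (ker f) :=
  have := projective_of_isComplemented (range f).isComplemented_of_projective_quotient_s18
  f.isComplemented_ker_of_projective_range

end Projective

section PersistenceModule

variable {R P : Type*} [Ring R] [LinearOrder P] {F : P → Type*} [∀ x, AddCommGroup (F x)]
  [∀ x, Module R (F x)] {Fmap : ∀ x y : P, x ≤ y → (F x →ₗ[R] F y)}

theorem isChain_range_structureMap
    (Fmap_comp : ∀ x y z (hxy : x ≤ y) (hyz : y ≤ z),
      (Fmap y z hyz).comp (Fmap x y hxy) = Fmap x z (hxy.trans hyz)) (z : P) :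
    IsChain (· ≤ ·) {S | ∃ (x : P) (h : x ≤ z), S = range (Fmap x z h)} := by
  rintro _ ⟨x, hx, rfl⟩ _ ⟨x', hx', rfl⟩ -
  rcases le_total x x' with h | h
  · exact .inl (Fmap_comp x x' z h hx' ▸ range_comp_le_range _ _)
  · exact .inr (Fmap_comp x' x z h hx ▸ range_comp_le_range _ _)

theorem isChain_ker_structureMap
    (Fmap_comp : ∀ x y z (hxy : x ≤ y) (hyz : y ≤ z),
      (Fmap y z hyz).comp (Fmap x y hxy) = Fmap x z (hxy.trans hyz)) (z : P) :
    IsChain (· ≤ ·) {S | ∃ (y : P) (h : z ≤ y), S = ker (Fmap z y h)} := by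
  rintro _ ⟨y, hy, rfl⟩ _ ⟨y', hy', rfl⟩ -
  rcases le_total y y' with h | h
  · exact .inl (Fmap_comp z y y' hy h ▸ ker_le_ker_comp _ _)
  · exact .inr (Fmap_comp z y' y hy' h ▸ ker_le_ker_comp _ _)

end PersistenceModule

theorem stmt_18_general {R : Type*} [Ring R] [IsNoetherianRing R] {P : Type*} [LinearOrder P]
    (F : P → Type*) [∀ x, AddCommGroup (F x)] [∀ x, Module R (F x)]
    (Fmap : ∀ x y : P, x ≤ y → (F x →ₗ[R] F y))
    (Fmap_comp : ∀ x y z (hxy : x ≤ y) (hyz : y ≤ z),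
      (Fmap y z hyz).comp (Fmap x y hxy) = Fmap x z (hxy.trans hyz))
    (hfg : ∀ x, Module.Finite R (F x))
    (hproj : ∀ x, Module.Projective R (F x))
    (hcoker : ∀ x y (h : x ≤ y),
      Module.Projective R (F y ⧸ LinearMap.range (Fmap x y h)))
    (z : P) :
    {S : Submodule R (F z) | ∃ (x : P) (h : x ≤ z),
        S = LinearMap.range (Fmap x z h)}.Finite ∧
    {S : Submodule R (F z) | ∃ (y : P) (h : z ≤ y),
        S = LinearMap.ker (Fmap z y h)}.Finite := by
  have := hfg z
  refine ⟨(isChain_range_structureMap Fmap_comp z).finite_of_isComplemented ?_,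
    (isChain_ker_structureMap Fmap_comp z).finite_of_isComplemented ?_⟩
  · rintro _ ⟨x, hx, rfl⟩
    have := hcoker x z hx
    exact isComplemented_of_projective_quotient_s18 _
  · rintro _ ⟨y, hy, rfl⟩
    have := hproj y
    have := hcoker z y hy
    exact isComplemented_ker_of_projective_coker _

/-- For a pointwise finitely generated totally ordered persistence module over
a Noetherian ring with pointwise projective values and projective cokernels of
all structure maps, the chain of images and the chain of kernels at any fixed
index z are finite sets. -/
theorem stmt_18 {R : Type*} [Ring R] [IsNoetherianRing R] {P : Type*} [LinearOrder P]
    (F : P → Type*) [∀ x, AddCommGroup (F x)] [∀ x, Module R (F x)]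
    (Fmap : ∀ x y : P, x ≤ y → (F x →ₗ[R] F y))
    (Fmap_id : ∀ x, Fmap x x le_rfl = LinearMap.id)
    (Fmap_comp : ∀ x y z (hxy : x ≤ y) (hyz : y ≤ z),
      (Fmap y z hyz).comp (Fmap x y hxy) = Fmap x z (hxy.trans hyz))
    (hfg : ∀ x, Module.Finite R (F x))
    (hproj : ∀ x, Module.Projective R (F x))
    (hcoker : ∀ x y (h : x ≤ y),
      Module.Projective R (F y ⧸ LinearMap.range (Fmap x y h)))
    (z : P) :
    {S : Submodule R (F z) | ∃ (x : P) (h : x ≤ z),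
        S = LinearMap.range (Fmap x z h)}.Finite ∧
    {S : Submodule R (F z) | ∃ (y : P) (h : z ≤ y),
        S = LinearMap.ker (Fmap z y h)}.Finite :=
  stmt_18_general F Fmap Fmap_comp hfg hproj hcoker z
end
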